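/- The function h(z_1,z_2) = 2/(2 - z_1 - z_2) is holomorphic on D^2 but does not belong to H^2(D^2); that is, sup over 0 < r < 1 of the integral over T^2 of |2 - r*zeta_1 - r*zeta_2|^{-2} dm(zeta) is infinite (equivalently, the integral over T^2 of |2 - zeta_1 - zeta_2|^{-2} dm(zeta) diverges). -/

import Mathlib

open MeasureTheory Complex Set Filter Topology MvPolynomial

noncomputable section

/-- The torus `T^2` as a subset of `ℂ × ℂ`. -/
def torus2 : Set (ℂ × ℂ) := {z | ‖z.1‖ = 1 ∧ ‖z.2‖ = 1}

/-- The open unit bidisc `D^2`. -/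
def bidisc : Set (ℂ × ℂ) := {z | ‖z.1‖ < 1 ∧ ‖z.2‖ < 1}

/-- The product Cauchy kernel on the bidisc. -/
def cauchyKer2 (z w : ℂ × ℂ) : ℂ :=
  ((1 - z.1 * (starRingEnd ℂ) w.1) * (1 - z.2 * (starRingEnd ℂ) w.2))⁻¹

/-- The product Poisson kernel on the bidisc. -/
def poissonKer2 (z ζ : ℂ × ℂ) : ℝ :=
  ((1 - ‖z.1‖ ^ 2) / ‖ζ.1 - z.1‖ ^ 2) *
    ((1 - ‖z.2‖ ^ 2) / ‖ζ.2 - z.2‖ ^ 2)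

/-- `σ` is the Clark-Aleksandrov measure of `b : D^2 → D` at parameter `α`. -/
def IsClarkMeasure2 (b : ℂ × ℂ → ℂ) (α : ℂ) (σ : Measure (ℂ × ℂ)) : Prop :=
  IsFiniteMeasure σ ∧ σ torus2ᶜ = 0 ∧
    ∀ z ∈ bidisc, ∫ ζ, poissonKer2 z ζ ∂σ =
      (1 - ‖b z‖ ^ 2) / ‖α - b z‖ ^ 2

/-- Normalized Haar (Lebesgue) measure on the unit circle `T`, as a measure on `ℂ`. -/
def haarCircle : Measure ℂ :=
  (ENNReal.ofReal (2 * Real.pi))⁻¹ •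
    ((volume : Measure ℝ).restrict (Set.Ioc (0 : ℝ) (2 * Real.pi))).map
      (fun t : ℝ => Complex.exp (t * Complex.I))

/-- Normalized Haar (Lebesgue) measure on `T^2`, as a measure on `ℂ × ℂ`. -/
def haarTorus2 : Measure (ℂ × ℂ) :=
  (ENNReal.ofReal (2 * Real.pi))⁻¹ ^ 2 •
    ((volume : Measure (ℝ × ℝ)).restrict
        (Set.Ioc (0 : ℝ) (2 * Real.pi) ×ˢ Set.Ioc (0 : ℝ) (2 * Real.pi))).map
      (fun t : ℝ × ℝ => (Complex.exp (t.1 * Complex.I), Complex.exp (t.2 * Complex.I)))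

open scoped ENNReal

/-! Writing `ζⱼ = exp (θⱼ i)`, near `ζ = (1, 1)` one has `‖2 - ζ₁ - ζ₂‖ ≤ θ₁ + θ₂`, and
`(θ₁ + θ₂)⁻²` is not integrable on `(0, 1]²`: its integral over `θ₂ ∈ (0, θ₁]` alone is at least
`(4 θ₁)⁻¹`. Fatou's lemma along `r → 1⁻` passes this divergence from the boundary integral to the
supremum of the integral means. -/

theorem lintegral_liminf_le_iSup_Ioo {α : Type*} [MeasurableSpace α] {μ : Measure α}
    {F : ℝ → α → ℝ≥0∞} {a b : ℝ} (hab : a < b) (hF : ∀ r, AEMeasurable (F r) μ) :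
    ∫⁻ x, liminf (fun r => F r x) (𝓝[<] b) ∂μ ≤ ⨆ r : Ioo a b, ∫⁻ x, F r x ∂μ := by
  refine (lintegral_liminf_le' hF).trans (liminf_le_of_frequently_le' ?_)
  have hmem : ∀ᶠ r in 𝓝[<] b, r ∈ Ioo a b := Ioo_mem_nhdsLT hab
  exact (hmem.mono fun r hr => le_iSup (fun r : Ioo a b => ∫⁻ x, F r x ∂μ) ⟨r, hr⟩).frequently

theorem lintegral_Ioc_ofReal_inv_eq_top {a : ℝ} (ha : 0 < a) :
    ∫⁻ s in Ioc 0 a, ENNReal.ofReal s⁻¹ = ⊤ := by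
  by_contra h
  have hpos : 0 ≤ᵐ[volume.restrict (Ioc 0 a)] fun s : ℝ => s⁻¹ := by
    filter_upwards [ae_restrict_mem measurableSet_Ioc] with s hs using inv_nonneg.2 hs.1.le
  have hint : IntegrableOn (fun s : ℝ => s⁻¹) (Ioc 0 a) :=
    (lintegral_ofReal_ne_top_iff_integrable measurable_inv.aestronglyMeasurable hpos).1 h
  rw [← intervalIntegrable_iff_integrableOn_Ioc_of_le ha.le, intervalIntegrable_inv_iff] at hint
  simp [ha.ne, ha.le] at hint

theorem ofReal_inv_le_lintegral_Ioc_inv_add_sq {a s : ℝ} (hs : s ∈ Ioc 0 a) :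
    ENNReal.ofReal 4⁻¹ * ENNReal.ofReal s⁻¹ ≤
      ∫⁻ t in Ioc 0 a, ENNReal.ofReal ((s + t) ^ 2)⁻¹ := by
  have hs0 : 0 < s := hs.1
  calc ENNReal.ofReal 4⁻¹ * ENNReal.ofReal s⁻¹
      = ∫⁻ _ in Ioc 0 s, ENNReal.ofReal (4 * s ^ 2)⁻¹ := by
        rw [setLIntegral_const, Real.volume_Ioc, sub_zero, ← ENNReal.ofReal_mul (by positivity),
          ← ENNReal.ofReal_mul (by positivity)]
        congr 1
        field_simp
    _ ≤ ∫⁻ t in Ioc 0 s, ENNReal.ofReal ((s + t) ^ 2)⁻¹ := by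
        refine setLIntegral_mono' measurableSet_Ioc fun t ht => ENNReal.ofReal_le_ofReal ?_
        have ht0 : 0 < t := ht.1
        exact inv_anti₀ (by positivity) (by nlinarith [ht.2])
    _ ≤ ∫⁻ t in Ioc 0 a, ENNReal.ofReal ((s + t) ^ 2)⁻¹ :=
        lintegral_mono_set (Ioc_subset_Ioc_right hs.2)

theorem setLIntegral_Ioc_prod_inv_add_sq_eq_top {a : ℝ} (ha : 0 < a) :
    ∫⁻ p in Ioc 0 a ×ˢ Ioc 0 a, ENNReal.ofReal ((p.1 + p.2) ^ 2)⁻¹ = ⊤ := by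
  rw [Measure.volume_eq_prod, ← Measure.prod_restrict, lintegral_prod _ (by fun_prop),
    eq_top_iff]
  calc ⊤ = ∫⁻ s in Ioc 0 a, ENNReal.ofReal 4⁻¹ * ENNReal.ofReal s⁻¹ := by
        rw [lintegral_const_mul _ (by fun_prop), lintegral_Ioc_ofReal_inv_eq_top ha,
          ENNReal.mul_top (by norm_num)]
    _ ≤ _ := setLIntegral_mono' measurableSet_Ioc fun s hs =>
        ofReal_inv_le_lintegral_Ioc_inv_add_sq hs

theorem norm_two_sub_exp_mul_I_sub_exp_mul_I_le (s t : ℝ) :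
    ‖2 - exp (s * I) - exp (t * I)‖ ≤ |s| + |t| := by
  have key : ∀ x : ℝ, ‖1 - exp (x * I)‖ ≤ |x| := fun x => by
    rw [norm_sub_rev, mul_comm]
    exact Real.norm_exp_I_mul_ofReal_sub_one_le
  calc ‖2 - exp (s * I) - exp (t * I)‖ = ‖(1 - exp (s * I)) + (1 - exp (t * I))‖ := by
        ring_nf
    _ ≤ |s| + |t| := (norm_add_le _ _).trans (add_le_add (key s) (key t))

theorem two_sub_exp_mul_I_sub_exp_mul_I_ne_zero {s : ℝ} (hs : s ∈ Ioo 0 (2 * Real.pi)) (t : ℝ) :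
    2 - exp (s * I) - exp (t * I) ≠ 0 := by
  intro h
  have hre : 2 - Real.cos s - Real.cos t = 0 := by
    simpa only [sub_re, exp_ofReal_mul_I_re, re_ofNat, zero_re] using congrArg re h
  have hcos_s : Real.cos s ≠ 1 := by
    rw [Ne, Real.cos_eq_one_iff_of_lt_of_lt (by linarith [hs.1, Real.pi_pos]) hs.2]
    exact hs.1.ne'
  linarith [(Real.cos_le_one s).lt_of_ne hcos_s, Real.cos_le_one t]

theorem ofReal_inv_add_sq_le {s t : ℝ} (hs : s ∈ Ioc 0 1) (ht : t ∈ Ioc 0 1) :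
    ENNReal.ofReal ((s + t) ^ 2)⁻¹ ≤
      ENNReal.ofReal (1 / ‖2 - exp (s * I) - exp (t * I)‖ ^ 2) := by
  have hs' : s ∈ Ioo 0 (2 * Real.pi) := ⟨hs.1, by linarith [hs.2, Real.pi_gt_three]⟩
  have hpos := norm_pos_iff.2 (two_sub_exp_mul_I_sub_exp_mul_I_ne_zero hs' t)
  have hle := norm_two_sub_exp_mul_I_sub_exp_mul_I_le s t
  rw [abs_of_pos hs.1, abs_of_pos ht.1] at hle
  rw [one_div]
  exact ENNReal.ofReal_le_ofReal (inv_anti₀ (by positivity) (pow_le_pow_left₀ hpos.le hle 2))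

theorem lintegral_haarTorus2 {f : ℂ × ℂ → ℝ≥0∞} (hf : Measurable f) :
    ∫⁻ ζ, f ζ ∂haarTorus2 = (ENNReal.ofReal (2 * Real.pi))⁻¹ ^ 2 *
      ∫⁻ t in Ioc 0 (2 * Real.pi) ×ˢ Ioc 0 (2 * Real.pi), f (exp (t.1 * I), exp (t.2 * I)) := by
  rw [haarTorus2, lintegral_smul_measure, lintegral_map hf (by fun_prop), smul_eq_mul]

theorem lintegral_inv_norm_two_sub_fst_sub_snd_sq_eq_top :
    ∫⁻ ζ, ENNReal.ofReal (1 / ‖2 - ζ.1 - ζ.2‖ ^ 2) ∂haarTorus2 = ⊤ := by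
  rw [lintegral_haarTorus2 (by fun_prop), ENNReal.mul_eq_top]
  refine Or.inl ⟨by simp [ENNReal.mul_eq_top], eq_top_iff.2 ?_⟩
  have hsub : Ioc (0 : ℝ) 1 ⊆ Ioc 0 (2 * Real.pi) :=
    Ioc_subset_Ioc_right (by linarith [Real.pi_gt_three])
  calc ⊤ = ∫⁻ p in Ioc (0 : ℝ) 1 ×ˢ Ioc (0 : ℝ) 1, ENNReal.ofReal ((p.1 + p.2) ^ 2)⁻¹ :=
        (setLIntegral_Ioc_prod_inv_add_sq_eq_top one_pos).symm
    _ ≤ ∫⁻ p in Ioc (0 : ℝ) 1 ×ˢ Ioc (0 : ℝ) 1,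
          ENNReal.ofReal (1 / ‖2 - exp (p.1 * I) - exp (p.2 * I)‖ ^ 2) :=
        setLIntegral_mono' (measurableSet_Ioc.prod measurableSet_Ioc) fun p hp =>
          ofReal_inv_add_sq_le hp.1 hp.2
    _ ≤ _ := lintegral_mono_set (prod_mono hsub hsub)

theorem ofReal_inv_norm_two_sub_fst_sub_snd_sq_le_liminf (ζ : ℂ × ℂ) :
    ENNReal.ofReal (1 / ‖2 - ζ.1 - ζ.2‖ ^ 2) ≤
      liminf (fun r : ℝ => ENNReal.ofReal (‖(2 : ℂ) / (2 - r • ζ.1 - r • ζ.2)‖ ^ 2)) (𝓝[<] 1) := by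
  by_cases hd : 2 - ζ.1 - ζ.2 = 0
  · simp [hd] -- at `ζ = (1, 1)` the left side is the junk value `ofReal (1 / 0) = 0`
  have hcont : ContinuousAt (fun r : ℝ => ‖(2 : ℂ) / (2 - r • ζ.1 - r • ζ.2)‖ ^ 2) 1 := by
    fun_prop (disch := simpa using hd)
  have hlim := (ENNReal.continuous_ofReal.tendsto _).comp
    (hcont.tendsto.mono_left (nhdsWithin_le_nhds (s := Iio 1)))
  rw [Function.comp_def] at hlim
  rw [hlim.liminf_eq]
  refine ENNReal.ofReal_le_ofReal ?_
  rw [one_smul, one_smul, norm_div, Complex.norm_two, div_pow, one_div, inv_eq_one_div]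
  gcongr
  norm_num

theorem two_sub_fst_sub_snd_ne_zero_of_mem_bidisc {z : ℂ × ℂ} (hz : z ∈ bidisc) :
    2 - z.1 - z.2 ≠ 0 := by
  intro h
  have hlt : ‖z.1 + z.2‖ < 2 := (norm_add_le _ _).trans_lt (by linarith [hz.1, hz.2])
  rw [show z.1 + z.2 = 2 by linear_combination -h] at hlt
  norm_num at hlt

theorem differentiableOn_two_div_two_sub_fst_sub_snd :
    DifferentiableOn ℂ (fun z : ℂ × ℂ => 2 / (2 - z.1 - z.2)) bidisc := fun _ hz =>
  DifferentiableAt.differentiableWithinAt <| by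
    fun_prop (disch := exact two_sub_fst_sub_snd_ne_zero_of_mem_bidisc hz)

theorem two_over_two_minus_z1_minus_z2_not_in_H2 :
    DifferentiableOn ℂ (fun z : ℂ × ℂ => 2 / (2 - z.1 - z.2)) bidisc ∧
    (⨆ r : Set.Ioo (0 : ℝ) 1,
      ∫⁻ ζ, ENNReal.ofReal
        (‖(2 : ℂ) / (2 - (r : ℝ) • ζ.1 - (r : ℝ) • ζ.2)‖ ^ 2)
        ∂haarTorus2) = ⊤ ∧
    ∫⁻ ζ, ENNReal.ofReal (1 / ‖2 - ζ.1 - ζ.2‖ ^ 2) ∂haarTorus2 = ⊤ := by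
  refine ⟨differentiableOn_two_div_two_sub_fst_sub_snd, ?_,
    lintegral_inv_norm_two_sub_fst_sub_snd_sq_eq_top⟩
  rw [eq_top_iff, ← lintegral_inv_norm_two_sub_fst_sub_snd_sq_eq_top]
  exact (lintegral_mono ofReal_inv_norm_two_sub_fst_sub_snd_sq_le_liminf).trans
    (lintegral_liminf_le_iSup_Ioo one_pos fun r => by fun_prop)
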